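/- Let G be a finite connected simple graph and u,v distinct twins in G. Then u and v are mutually maximally distant in G (hence {u,v} is an edge of the strong resolving graph G_SR). -/

import Mathlib

/-- Vertex `u` is maximally distant to `v`: no neighbour of `u` is farther from `v`. -/
def MaxDistTo {V : Type*} (G : SimpleGraph V) (u v : V) : Prop :=
  ∀ u', G.Adj u u' → G.dist u' v ≤ G.dist u v

/-- Vertices `u` and `v` are mutually maximally distant in `G`. -/
def MutuallyMaxDist {V : Type*} (G : SimpleGraph V) (u v : V) : Prop :=
  MaxDistTo G u v ∧ MaxDistTo G v u

/-- The strong resolving graph of `G`. -/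
def strongResolvingGraph {V : Type*} (G : SimpleGraph V) : SimpleGraph V where
  Adj u v := u ≠ v ∧ MutuallyMaxDist G u v
  symm := by
    constructor
    rintro u v ⟨h1, h2, h3⟩
    exact ⟨h1.symm, h3, h2⟩
  loopless := by
    constructor
    rintro u ⟨h, -⟩
    exact h rfl

/-- `w` strongly resolves the pair `u, v`. -/
def StronglyResolves {V : Type*} (G : SimpleGraph V) (w u v : V) : Prop :=
  G.dist w u = G.dist w v + G.dist v u ∨ G.dist w v = G.dist w u + G.dist u v

/-- `R` is a strong resolving set for `G`. -/
def IsStrongResolvingSet {V : Type*} (G : SimpleGraph V) (R : Set V) : Prop :=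
  ∀ u v : V, u ≠ v → ∃ w ∈ R, StronglyResolves G w u v

/-- The strong metric dimension of `G`. -/
noncomputable def smd {V : Type*} [Fintype V] (G : SimpleGraph V) : ℕ :=
  sInf {n | ∃ R : Finset V, IsStrongResolvingSet G ↑R ∧ R.card = n}

/-- `C` is a vertex cover of `H`. -/
def IsVertexCover {V : Type*} (H : SimpleGraph V) (C : Set V) : Prop :=
  ∀ a b : V, H.Adj a b → a ∈ C ∨ b ∈ C

/-- The minimum size of a vertex cover of `H`. -/
noncomputable def tau {V : Type*} [Fintype V] (H : SimpleGraph V) : ℕ :=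
  sInf {n | ∃ C : Finset V, IsVertexCover H ↑C ∧ C.card = n}

/-- Distinct vertices are twins if they have the same neighbours apart from each other. -/
def Twins {V : Type*} (G : SimpleGraph V) (u v : V) : Prop :=
  G.neighborSet u \ {v} = G.neighborSet v \ {u}

/-- True twins: adjacent twins (equivalently, equal closed neighbourhoods). -/
def TrueTwins {V : Type*} (G : SimpleGraph V) (u v : V) : Prop :=
  Twins G u v ∧ G.Adj u v

/-- False twins: non-adjacent twins (equivalently, equal open neighbourhoods). -/
def FalseTwins {V : Type*} (G : SimpleGraph V) (u v : V) : Prop :=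
  Twins G u v ∧ ¬ G.Adj u v

/-- `G` contains an induced path on four vertices. -/
def HasInducedP4 {V : Type*} (G : SimpleGraph V) : Prop :=
  ∃ a b c d : V, a ≠ c ∧ a ≠ d ∧ b ≠ d ∧
    G.Adj a b ∧ G.Adj b c ∧ G.Adj c d ∧ ¬ G.Adj a c ∧ ¬ G.Adj a d ∧ ¬ G.Adj b d

/-!
A neighbour `w ≠ v` of `u` is, by twinship, also a neighbour of `v`; so `u` and `v` are joined
by a path through `w`, whence `d(w, v) = 1 ≤ d(u, v)`. The remaining neighbour `v` itself has
`d(v, v) = 0`.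
-/

namespace Twins

variable {V : Type*} {G : SimpleGraph V} {u v w : V}

theorem symm (h : Twins G u v) : Twins G v u :=
  Eq.symm h

theorem adj_of_adj_of_ne (h : Twins G u v) (huw : G.Adj u w) (hwv : w ≠ v) : G.Adj v w :=
  (show w ∈ G.neighborSet v \ {u} from h ▸ ⟨huw, hwv⟩).1

theorem maxDistTo (h : Twins G u v) (huv : u ≠ v) : MaxDistTo G u v := by
  intro w huw
  by_cases hwv : w = v
  · simp [hwv]
  have hvw : G.Adj v w := h.adj_of_adj_of_ne huw hwv
  have hreach : G.Reachable u v := huw.reachable.trans hvw.symm.reachable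
  calc G.dist w v = 1 := SimpleGraph.dist_eq_one_iff_adj.mpr hvw.symm
    _ ≤ G.dist u v := hreach.pos_dist_of_ne huv

theorem mutuallyMaxDist (h : Twins G u v) (huv : u ≠ v) : MutuallyMaxDist G u v :=
  ⟨h.maxDistTo huv, h.symm.maxDistTo huv.symm⟩

end Twins

theorem twins_mutuallyMaxDist_general {V : Type*}
    (G : SimpleGraph V) (u v : V) (huv : u ≠ v)
    (h : Twins G u v) :
    MutuallyMaxDist G u v ∧ (strongResolvingGraph G).Adj u v := by
  have hmut : MutuallyMaxDist G u v := h.mutuallyMaxDist huv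
  exact ⟨hmut, huv, hmut⟩

/-- distinct twins of a finite connected graph are mutually
maximally distant, hence adjacent in the strong resolving graph. -/
theorem twins_mutuallyMaxDist {V : Type*} [Fintype V]
    (G : SimpleGraph V) (hG : G.Connected) (u v : V) (huv : u ≠ v)
    (h : Twins G u v) :
    MutuallyMaxDist G u v ∧ (strongResolvingGraph G).Adj u v :=
  twins_mutuallyMaxDist_general G u v huv h
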